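/- Let d ≥ 1, x ∈ [0,1]^d, ε > 0 and u ∈ ℝ^d with ‖u − x‖₁ > ε. If P_{B₁(x,ε)}(u) ∉ [0,1]^d, then the approximate projection lies strictly inside the l1-ball: ‖A(u) − x‖₁ < ε. -/
import Mathlib

lemma clip_abs_le (a x : ℝ) (hx : x ∈ Set.Icc (0:ℝ) 1) :
    |max 0 (min a 1) - x| ≤ |a - x| := by
  obtain ⟨h0, h1⟩ := hx
  rcases lt_or_ge a 0 with h | h
  · rw [min_eq_left (by linarith), max_eq_left (by linarith),
      abs_of_nonpos (by linarith), abs_of_nonpos (by linarith)]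
    linarith
  rcases le_or_gt a 1 with h' | h'
  · rw [min_eq_left h', max_eq_right h]
  · rw [min_eq_right (by linarith), max_eq_right (by norm_num),
      abs_of_nonneg (by linarith), abs_of_nonneg (by linarith)]
    linarith

lemma clip_abs_lt (a x : ℝ) (hx : x ∈ Set.Icc (0:ℝ) 1)
    (ha : a ∉ Set.Icc (0:ℝ) 1) :
    |max 0 (min a 1) - x| < |a - x| := by
  obtain ⟨h0, h1⟩ := hx
  rw [Set.mem_Icc, not_and_or, not_le, not_le] at ha
  rcases ha with h | h
  · rw [min_eq_left (by linarith), max_eq_left (by linarith),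
      abs_of_nonpos (by linarith), abs_of_nonpos (by linarith)]
    linarith
  · rw [min_eq_right (by linarith), max_eq_right (by norm_num),
      abs_of_nonneg (by linarith), abs_of_nonneg (by linarith)]
    linarith

/-- If `‖u − x‖₁ > ε` and the `l1`-ball projection `p = P_{B₁(x,ε)}(u)` leaves the box
`[0,1]^d`, then the approximate projection `A(u) = P_H(p)` lies strictly inside the
`l1`-ball: `‖A(u) − x‖₁ < ε`. -/
theorem approx_projection_strictly_inside
    (d : ℕ) (hd : 1 ≤ d) (x u : Fin d → ℝ)
    (hx : ∀ i, x i ∈ Set.Icc (0:ℝ) 1) (ε : ℝ) (hε : 0 < ε)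
    (hu : ε < ∑ i, |u i - x i|)
    (p : Fin d → ℝ)
    (hp1 : ∑ i, |p i - x i| ≤ ε)
    (hp2 : ∀ v : Fin d → ℝ, ∑ i, |v i - x i| ≤ ε →
      Real.sqrt (∑ i, (u i - p i)^2) ≤ Real.sqrt (∑ i, (u i - v i)^2))
    (hpnotbox : ¬ ∀ i, p i ∈ Set.Icc (0:ℝ) 1) :
    ∑ i, |max 0 (min (p i) 1) - x i| < ε := by
  push_neg at hpnotbox
  obtain ⟨j, hj⟩ := hpnotbox
  calc ∑ i, |max 0 (min (p i) 1) - x i| < ∑ i, |p i - x i| := by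
        refine Finset.sum_lt_sum (fun i _ => clip_abs_le _ _ (hx i)) ⟨j, Finset.mem_univ j, ?_⟩
        exact clip_abs_lt _ _ (hx j) hj
    _ ≤ ε := hp1
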